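/- Let γ > 0 and let a1, a2, a3 be nonnegative, pairwise distinct real numbers, and let L = γ( a1 · σ1⊗σ1 + a2 · σ2ᵀ⊗σ2 + a3 · σ3⊗σ3 − (a1+a2+a3) · I₄ ). Let A, B, C, D ∈ ℝ and let Q = !![A, C + iD; C − iD, B] ∈ M₂(ℂ). Then the four vectors vec(I₂), vec(Q), L† vec(Q), (L†)² vec(Q) in ℂ⁴ are linearly independent if and only if A ≠ B, C ≠ 0 and D ≠ 0. -/

import Mathlib

/-!
Since `vec (σₖ Y σₖ) = (σₖᵀ ⊗ σₖ) vec Y`, the matrix `L` is the generator of a Pauli channel,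
`Y ↦ γ (∑ₖ aₖ σₖ Y σₖ − (a1 + a2 + a3) Y)`, so `L†` is diagonal in the Pauli basis
`vec I₂, vec σ1, vec σ2, vec σ3`, with eigenvalues `0, −2γ(a2 + a3), −2γ(a1 + a3), −2γ(a1 + a2)`.
In that basis `Q = ((A + B)/2) I₂ + C σ1 − D σ2 + ((A − B)/2) σ3`, and the coordinate matrix of
`vec I₂, vec Q, L† vec Q, (L†)² vec Q` has determinant `C · (−D) · (A − B)/2` times the
Vandermonde determinant of the last three eigenvalues, whose differences are `2γ (aⱼ − aᵢ)`.
-/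

open Matrix Complex Kronecker

noncomputable section

def pauli1 : Matrix (Fin 2) (Fin 2) ℂ := !![0, 1; 1, 0]
def pauli2 : Matrix (Fin 2) (Fin 2) ℂ := !![0, -I; I, 0]
def pauli3 : Matrix (Fin 2) (Fin 2) ℂ := !![1, 0; 0, -1]

/-- The generator of evolution
`L = γ( a1 σ1⊗σ1 + a2 σ2ᵀ⊗σ2 + a3 σ3⊗σ3 − (a1+a2+a3) I₄ )`. -/
def gen2 (γ a1 a2 a3 : ℝ) : Matrix (Fin 2 × Fin 2) (Fin 2 × Fin 2) ℂ :=
  (γ : ℂ) • ((a1 : ℂ) • (pauli1 ⊗ₖ pauli1) + (a2 : ℂ) • (pauli2ᵀ ⊗ₖ pauli2)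
    + (a3 : ℂ) • (pauli3 ⊗ₖ pauli3)
    - ((a1 + a2 + a3 : ℝ) : ℂ) • (1 : Matrix (Fin 2 × Fin 2) (Fin 2 × Fin 2) ℂ))

/-- Column-stacking vectorization `vec : M₂(ℂ) → ℂ⁴`, indexed so that
`vec(XYZ) = (Zᵀ ⊗ X) vec(Y)`: the entry of `vec M` at `(j, i)` is `M i j`. -/
def vec2 (M : Matrix (Fin 2) (Fin 2) ℂ) : Fin 2 × Fin 2 → ℂ := fun p => M p.2 p.1

theorem LinearIndependent.linearIndependent_sum_smul_iff {K V ι : Type*} [Field K]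
    [AddCommGroup V] [Module K V] [Fintype ι] [DecidableEq ι] {b : ι → V}
    (hb : LinearIndependent K b) (M : Matrix ι ι K) :
    LinearIndependent K (fun j => ∑ i, M j i • b i) ↔ M.det ≠ 0 := by
  rw [← isUnit_iff_ne_zero, ← isUnit_iff_isUnit_det, ← linearIndependent_rows_iff_isUnit,
    ← (Fintype.linearCombination K b).linearIndependent_iff_of_injOn
      hb.fintypeLinearCombination_injective.injOn]
  rfl

theorem map_sum_smul_of_eigen {K V ι : Type*} [CommSemiring K] [AddCommMonoid V] [Module K V]
    [Fintype ι] {f : V →ₗ[K] V} {b : ι → V} {μ : ι → K} (hf : ∀ i, f (b i) = μ i • b i)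
    (c : ι → K) :
    f (∑ i, c i • b i) = ∑ i, (μ * c) i • b i := by
  simp only [map_sum, map_smul, hf, smul_smul, Pi.mul_apply, mul_comm]

theorem det_krylov {R : Type*} [CommRing R] (c μ : Fin 4 → R) :
    (Matrix.of ![![1, 0, 0, 0], c, μ * c, μ * (μ * c)]).det
      = c 1 * c 2 * c 3 * ((μ 2 - μ 1) * (μ 3 - μ 1) * (μ 3 - μ 2)) := by
  simp [det_succ_row_zero, Fin.sum_univ_succ, Fin.succAbove]
  ring

theorem linearIndependent_krylov_iff {K V : Type*} [Field K] [AddCommGroup V] [Module K V]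
    {b : Fin 4 → V} (hb : LinearIndependent K b) {f : V →ₗ[K] V} {μ : Fin 4 → K}
    (hf : ∀ i, f (b i) = μ i • b i) (c : Fin 4 → K) :
    LinearIndependent K ![b 0, ∑ i, c i • b i, f (∑ i, c i • b i), f (f (∑ i, c i • b i))]
      ↔ c 1 * c 2 * c 3 * ((μ 2 - μ 1) * (μ 3 - μ 1) * (μ 3 - μ 2)) ≠ 0 := by
  rw [← det_krylov, ← hb.linearIndependent_sum_smul_iff]
  convert Iff.rfl using 2
  rw [map_sum_smul_of_eigen hf, map_sum_smul_of_eigen hf]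
  ext j : 1
  fin_cases j <;> simp [Fin.sum_univ_four]

def pauliVec : Fin 4 → Fin 2 × Fin 2 → ℂ := ![vec2 1, vec2 pauli1, vec2 pauli2, vec2 pauli3]

theorem linearIndependent_pauliVec : LinearIndependent ℂ pauliVec := by
  rw [Fintype.linearIndependent_iff]
  intro g hg
  have h00 : g 0 + g 3 = 0 := by
    simpa [Fin.sum_univ_four, pauliVec, vec2, pauli1, pauli2, pauli3] using congrFun hg (0, 0)
  have h11 : g 0 - g 3 = 0 := by
    simpa [Fin.sum_univ_four, pauliVec, vec2, pauli1, pauli2, pauli3, ← sub_eq_add_neg]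
      using congrFun hg (1, 1)
  have h01 : g 1 + g 2 * I = 0 := by
    simpa [Fin.sum_univ_four, pauliVec, vec2, pauli1, pauli2, pauli3] using congrFun hg (0, 1)
  have h10 : g 1 - g 2 * I = 0 := by
    simpa [Fin.sum_univ_four, pauliVec, vec2, pauli1, pauli2, pauli3, ← sub_eq_add_neg]
      using congrFun hg (1, 0)
  have g0 : g 0 = 0 := by linear_combination (h00 + h11) / 2
  have g1 : g 1 = 0 := by linear_combination (h01 + h10) / 2
  have g2 : g 2 = 0 := by simpa using (by linear_combination (h01 - h10) / 2 : g 2 * I = 0)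
  have g3 : g 3 = 0 := by linear_combination (h00 - h11) / 2
  intro i
  fin_cases i <;> assumption

def gen2Eigenvalue (γ a1 a2 a3 : ℝ) : Fin 4 → ℂ :=
  ![0, -2 * γ * (a2 + a3), -2 * γ * (a1 + a3), -2 * γ * (a1 + a2)]

theorem gen2_conjTranspose_mulVec_pauliVec (γ a1 a2 a3 : ℝ) (i : Fin 4) :
    (gen2 γ a1 a2 a3)ᴴ *ᵥ pauliVec i = gen2Eigenvalue γ a1 a2 a3 i • pauliVec i := by
  ext ⟨j, k⟩
  fin_cases i <;> fin_cases j <;> fin_cases k <;>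
    simp [mulVec, dotProduct, Fintype.sum_prod_type, one_apply, gen2, gen2Eigenvalue, pauliVec,
      vec2, pauli1, pauli2, pauli3] <;>
    ring

theorem gen2Eigenvalue_differences_ne_zero {γ a1 a2 a3 : ℝ} (hγ : γ ≠ 0) (h12 : a1 ≠ a2)
    (h13 : a1 ≠ a3) (h23 : a2 ≠ a3) :
    (gen2Eigenvalue γ a1 a2 a3 2 - gen2Eigenvalue γ a1 a2 a3 1)
      * (gen2Eigenvalue γ a1 a2 a3 3 - gen2Eigenvalue γ a1 a2 a3 1)
      * (gen2Eigenvalue γ a1 a2 a3 3 - gen2Eigenvalue γ a1 a2 a3 2) ≠ 0 := by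
  have h : (gen2Eigenvalue γ a1 a2 a3 2 - gen2Eigenvalue γ a1 a2 a3 1)
      * (gen2Eigenvalue γ a1 a2 a3 3 - gen2Eigenvalue γ a1 a2 a3 1)
      * (gen2Eigenvalue γ a1 a2 a3 3 - gen2Eigenvalue γ a1 a2 a3 2)
      = ((8 * γ ^ 3 * ((a2 - a1) * (a3 - a1) * (a3 - a2)) : ℝ) : ℂ) := by
    simp [gen2Eigenvalue]
    ring
  rw [h, Complex.ofReal_ne_zero]
  simp [hγ, sub_eq_zero, h12.symm, h13.symm, h23.symm]

def pauliCoord (A B C D : ℝ) : Fin 4 → ℂ := ![(A + B) / 2, C, -D, (A - B) / 2]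

theorem vec2_eq_sum_pauliCoord_smul (A B C D : ℝ) :
    vec2 !![(A : ℂ), (C : ℂ) + (D : ℂ) * I; (C : ℂ) - (D : ℂ) * I, (B : ℂ)]
      = ∑ i, pauliCoord A B C D i • pauliVec i := by
  ext ⟨j, k⟩
  fin_cases j <;> fin_cases k <;>
    simp [Fin.sum_univ_four, pauliCoord, pauliVec, vec2, pauli1, pauli2, pauli3] <;>
    ring

theorem observable_tomography_condition (γ a1 a2 a3 : ℝ) (hγ : 0 < γ)
    (h12 : a1 ≠ a2) (h13 : a1 ≠ a3) (h23 : a2 ≠ a3)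
    (A B C D : ℝ) :
    LinearIndependent ℂ
      ![vec2 (1 : Matrix (Fin 2) (Fin 2) ℂ),
        vec2 !![(A : ℂ), (C : ℂ) + (D : ℂ) * I; (C : ℂ) - (D : ℂ) * I, (B : ℂ)],
        (gen2 γ a1 a2 a3)ᴴ.mulVec
          (vec2 !![(A : ℂ), (C : ℂ) + (D : ℂ) * I; (C : ℂ) - (D : ℂ) * I, (B : ℂ)]),
        (gen2 γ a1 a2 a3)ᴴ.mulVec ((gen2 γ a1 a2 a3)ᴴ.mulVec
          (vec2 !![(A : ℂ), (C : ℂ) + (D : ℂ) * I; (C : ℂ) - (D : ℂ) * I, (B : ℂ)]))]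
      ↔ (A ≠ B ∧ C ≠ 0 ∧ D ≠ 0) := by
  rw [vec2_eq_sum_pauliCoord_smul]
  refine (linearIndependent_krylov_iff linearIndependent_pauliVec
    (f := (gen2 γ a1 a2 a3)ᴴ.mulVecLin) (gen2_conjTranspose_mulVec_pauliVec γ a1 a2 a3) _).trans ?_
  rw [mul_ne_zero_iff, and_iff_left (gen2Eigenvalue_differences_ne_zero hγ.ne' h12 h13 h23)]
  simp [pauliCoord, sub_eq_zero, and_comm]

end
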